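/- arXiv:math/0209285 — 2 statements merged into one kernel-verified Lean document; each statement's English description precedes it below -/
import Mathlib

section
/- Let A be a reduced ℕ-graded ring generated over A₀ by homogeneous elements x₁,…,xₙ of positive degrees ω₁,…,ωₙ, let w = lcm(ω₁,…,ωₙ), let k be a positive integer, and let I = A_{≥kw}. If I^p = A_{≥pkw} for every integer p with 1 ≤ p ≤ (n−2)/k + 1, then I is a normal ideal. In particular, if k ≥ n−1 then I is a normal ideal. -/
open Finset

/-- `x` is integral over the ideal `I`: it satisfies an equation
`x^m + a₁ x^{m-1} + ⋯ + a_m = 0` with `a_k ∈ I^k`. -/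
def IsIntegralOverIdeal {A : Type*} [CommRing A] (I : Ideal A) (x : A) : Prop :=
  ∃ m : ℕ, 0 < m ∧ ∃ a : ℕ → A,
    (∀ k ∈ Finset.Icc 1 m, a k ∈ I ^ k) ∧
    x ^ m + ∑ k ∈ Finset.Icc 1 m, a k * x ^ (m - k) = 0

/-- An ideal is integrally closed if it contains every element integral over it. -/
def IsIntegrallyClosedIdeal {A : Type*} [CommRing A] (I : Ideal A) : Prop :=
  ∀ x : A, IsIntegralOverIdeal I x → x ∈ I

/-- An ideal is normal if all its positive powers are integrally closed. -/
def IsNormalIdeal {A : Type*} [CommRing A] (I : Ideal A) : Prop :=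
  ∀ m : ℕ, 0 < m → IsIntegrallyClosedIdeal (I ^ m)

/-- For an ℕ-graded ring `A` (graded by `𝒜`), the homogeneous ideal
`A_{≥ m} = ⊕_{ℓ ≥ m} A_ℓ`, realized as the ideal generated by all homogeneous
elements of degree at least `m`. -/
def idealGe {A : Type*} [CommRing A] (𝒜 : ℕ → AddSubgroup A) (m : ℕ) : Ideal A :=
  Ideal.span {a : A | ∃ ℓ : ℕ, m ≤ ℓ ∧ a ∈ 𝒜 ℓ}

/-!
Write `m = k w`. In a reduced graded ring every `A_{≥m}` is integrally closed: if `z` is integral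
over `A_{≥m}` and its lowest nonzero component `c` sits in degree `d < m`, then modulo `A_{≥Nd+1}`
an integral equation of degree `N` collapses to `c ^ N`, which is homogeneous of degree `N d`;
hence `c ^ N = 0` and `c = 0`. So `I` is normal as soon as `I ^ p = A_{≥pm}` for every `p`, and
by induction on `p` it suffices that `A_{≥(q+1)m} ⊆ I · A_{≥qm}` whenever `n - 1 ≤ q k`; the
remaining `p` are exactly those covered by the hypothesis.
Each `A_ℓ` is spanned by the `A₀`-multiples of monomials `x^α` of degree `ℓ`. Since `ω i ∣ w`,
the power `x i ^ (w / ω i)` has degree `w`, and `x^α` contains `⌊α i ω i / w⌋` such blocks of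
`x i`, losing less than `w` of degree per variable. So a monomial of degree at least
`(q+1) k w ≥ (k+n-1) w` contains `k` blocks, i.e. splits off a factor `x^β` of degree `k w`.
-/

open DirectSum Pointwise

theorem exists_le_sum_eq {ι : Type*} [Fintype ι] {f : ι → ℕ} {k : ℕ} (hk : k ≤ ∑ i, f i) :
    ∃ t ≤ f, ∑ i, t i = k := by
  obtain ⟨g, hgf, hgk⟩ := Finsupp.exists_le_degree_eq (Finsupp.equivFunOnFinite.symm f) k
    (by rwa [Finsupp.degree_eq_sum])
  exact ⟨g, fun i => hgf i, by rwa [Finsupp.degree_eq_sum] at hgk⟩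

theorem exists_le_sum_mul_eq {ι : Type*} [Fintype ι] {ω α : ι → ℕ} {w k q : ℕ}
    (hdvd : ∀ i, ω i ∣ w) (hq : Fintype.card ι - 1 ≤ q * k)
    (hα : (q + 1) * k * w ≤ ∑ i, α i * ω i) :
    ∃ β ≤ α, ∑ i, β i * ω i = k * w := by
  rcases Nat.eq_zero_or_pos (k * w) with hkw | hkw
  · exact ⟨0, fun _ => Nat.zero_le _, by simp [hkw]⟩
  have hw : 0 < w := Nat.pos_of_mul_pos_left hkw
  have hω : ∀ i, 0 < ω i := fun i => Nat.pos_of_dvd_of_pos (hdvd i) hw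
  have hne : (Finset.univ : Finset ι).Nonempty := by
    by_contra h
    rw [Finset.not_nonempty_iff_eq_empty.1 h, Finset.sum_empty] at hα
    exact hkw.ne' (by nlinarith)
  set u : ι → ℕ := fun i => w / ω i
  have huω : ∀ i, u i * ω i = w := fun i => Nat.div_mul_cancel (hdvd i)
  have hu : ∀ i, 0 < u i := fun i => Nat.pos_of_mul_pos_right ((huω i).symm ▸ hw)
  have hlt : ∑ i, α i * ω i < (∑ i, α i / u i + Fintype.card ι) * w := by
    calc ∑ i, α i * ω i < ∑ i, (α i / u i + 1) * w :=
          Finset.sum_lt_sum_of_nonempty hne fun i _ => calc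
            α i * ω i < u i * (α i / u i + 1) * ω i :=
              Nat.mul_lt_mul_of_pos_right (Nat.lt_mul_div_succ _ (hu i)) (hω i)
            _ = (α i / u i + 1) * w := by rw [← huω i]; ring
      _ = (∑ i, α i / u i + Fintype.card ι) * w := by
          simp [Finset.sum_add_distrib, Finset.sum_mul, add_mul]
  have hQ : k ≤ ∑ i, α i / u i := by
    have hkn : k + Fintype.card ι - 1 ≤ (q + 1) * k := by rw [add_mul]; omega
    have := Nat.lt_of_mul_lt_mul_right
      (((Nat.mul_le_mul_right w hkn).trans hα).trans_lt hlt)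
    omega
  obtain ⟨t, ht, htk⟩ := exists_le_sum_eq hQ
  refine ⟨fun i => t i * u i, fun i => (Nat.mul_le_mul_right _ (ht i)).trans
    (Nat.div_mul_le_self _ _), ?_⟩
  simp only [mul_assoc, huω, ← Finset.sum_mul, htk]

section GradedRing

variable {A : Type*} [CommRing A] (𝒜 : ℕ → AddSubgroup A)

theorem mem_idealGe_of_mem {a : A} {ℓ m : ℕ} (hm : m ≤ ℓ) (ha : a ∈ 𝒜 ℓ) : a ∈ idealGe 𝒜 m :=
  Ideal.subset_span ⟨ℓ, hm, ha⟩

theorem idealGe_antitone : Antitone (idealGe 𝒜) :=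
  fun _ _ h => Ideal.span_mono fun _ ⟨ℓ, hℓ, ha⟩ => ⟨ℓ, h.trans hℓ, ha⟩

variable [GradedRing 𝒜]

theorem mem_idealGe_iff {a : A} {m : ℕ} :
    a ∈ idealGe 𝒜 m ↔ ∀ d < m, (decompose 𝒜 a d : A) = 0 := by
  refine ⟨fun ha => ?_, fun h => ?_⟩
  · induction ha using Submodule.span_induction with
    | mem z hz =>
      obtain ⟨ℓ, hℓ, hz⟩ := hz
      exact fun d hd => decompose_of_mem_ne 𝒜 hz (by omega)
    | zero => simp
    | add y z _ _ hy hz => intro d hd; simp [hy d hd, hz d hd]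
    | smul r z _ hz =>
      intro d hd
      rw [smul_eq_mul, decompose_mul, coe_mul_apply_eq_sum_antidiagonal]
      refine Finset.sum_eq_zero fun ij hij => ?_
      rw [hz ij.2 ((HasAntidiagonal.antidiagonal.snd_le hij).trans_lt hd), mul_zero]
  · classical
    rw [← sum_support_decompose 𝒜 a]
    refine Ideal.sum_mem _ fun d _ => ?_
    by_cases hd : d < m
    · rw [h d hd]
      exact zero_mem _
    · exact mem_idealGe_of_mem 𝒜 (not_lt.1 hd) (SetLike.coe_mem _)

theorem idealGe_zero : idealGe 𝒜 0 = ⊤ :=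
  eq_top_iff.2 fun _ _ => (mem_idealGe_iff 𝒜).2 fun _ h => absurd h (Nat.not_lt_zero _)

theorem idealGe_mul_le (i j : ℕ) : idealGe 𝒜 i * idealGe 𝒜 j ≤ idealGe 𝒜 (i + j) := by
  rw [idealGe, idealGe, Ideal.span_mul_span, Ideal.span_le]
  rintro _ ⟨a, ⟨ℓ, hℓ, ha⟩, b, ⟨ℓ', hℓ', hb⟩, rfl⟩
  exact mem_idealGe_of_mem 𝒜 (add_le_add hℓ hℓ') (SetLike.mul_mem_graded ha hb)

theorem mul_mem_idealGe {a b : A} {i j l : ℕ} (ha : a ∈ idealGe 𝒜 i) (hb : b ∈ idealGe 𝒜 j)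
    (hl : l ≤ i + j) : a * b ∈ idealGe 𝒜 l :=
  idealGe_antitone 𝒜 hl (idealGe_mul_le 𝒜 i j (Ideal.mul_mem_mul ha hb))

theorem pow_idealGe_le (m : ℕ) : ∀ j, idealGe 𝒜 m ^ j ≤ idealGe 𝒜 (j * m)
  | 0 => by rw [pow_zero, zero_mul, idealGe_zero, Ideal.one_eq_top]
  | j + 1 => by
    rw [pow_succ, add_mul, one_mul]
    exact (Ideal.mul_mono_left (pow_idealGe_le m j)).trans (idealGe_mul_le 𝒜 _ _)

theorem pow_mem_idealGe {a : A} {d : ℕ} (ha : a ∈ idealGe 𝒜 d) (j : ℕ) :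
    a ^ j ∈ idealGe 𝒜 (j * d) :=
  pow_idealGe_le 𝒜 d j (Ideal.pow_mem_pow ha j)

theorem eq_zero_of_mem_of_mem_idealGe {a : A} {d m : ℕ} (ha : a ∈ 𝒜 d)
    (ham : a ∈ idealGe 𝒜 m) (hdm : d < m) : a = 0 := by
  simpa [decompose_of_mem_same 𝒜 ha] using (mem_idealGe_iff 𝒜).1 ham d hdm

theorem sub_decompose_mem_idealGe_succ {z : A} {d : ℕ} (hz : z ∈ idealGe 𝒜 d) :
    z - decompose 𝒜 z d ∈ idealGe 𝒜 (d + 1) := by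
  rw [mem_idealGe_iff] at hz ⊢
  intro e he
  rw [decompose_sub, DirectSum.sub_apply, AddSubgroupClass.coe_sub]
  rcases (Nat.lt_succ_iff.1 he).lt_or_eq with he | rfl
  · rw [hz e he, decompose_of_mem_ne 𝒜 (SetLike.coe_mem _) he.ne', sub_zero]
  · rw [decompose_of_mem_same 𝒜 (SetLike.coe_mem _), sub_self]

theorem pow_sub_pow_mem_idealGe {z c : A} {d : ℕ} (hz : z ∈ idealGe 𝒜 d)
    (hc : c ∈ idealGe 𝒜 d) (hzc : z - c ∈ idealGe 𝒜 (d + 1)) (N : ℕ) :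
    z ^ N - c ^ N ∈ idealGe 𝒜 (N * d + 1) := by
  induction N with
  | zero => simp
  | succ N ih =>
    rw [show z ^ (N + 1) - c ^ (N + 1) = z ^ N * (z - c) + (z ^ N - c ^ N) * c by ring]
    exact add_mem (mul_mem_idealGe 𝒜 (pow_mem_idealGe 𝒜 hz N) hzc (by ring_nf; omega))
      (mul_mem_idealGe 𝒜 ih hc (by ring_nf; omega))

theorem decompose_eq_zero_of_isIntegralOverIdeal [IsReduced A] {z : A} {d m : ℕ}
    (hz : z ∈ idealGe 𝒜 d) (hdm : d < m) (hint : IsIntegralOverIdeal (idealGe 𝒜 m) z) :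
    (decompose 𝒜 z d : A) = 0 := by
  obtain ⟨N, -, a, ha, heq⟩ := hint
  set c : A := (decompose 𝒜 z d : A)
  have hc : c ∈ 𝒜 d := SetLike.coe_mem _
  have hterm : ∀ j ∈ Finset.Icc 1 N, a j * z ^ (N - j) ∈ idealGe 𝒜 (N * d + 1) := by
    intro j hj
    obtain ⟨hj1, hjN⟩ := Finset.mem_Icc.1 hj
    refine mul_mem_idealGe 𝒜 (pow_idealGe_le 𝒜 m j (ha j hj)) (pow_mem_idealGe 𝒜 hz _) ?_
    obtain ⟨e, rfl⟩ := Nat.exists_eq_add_of_le hjN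
    rw [Nat.add_sub_cancel_left]
    nlinarith
  have hcN : c ^ N ∈ idealGe 𝒜 (N * d + 1) := by
    rw [show c ^ N = -((z ^ N - c ^ N) + ∑ j ∈ Finset.Icc 1 N, a j * z ^ (N - j)) by
      linear_combination heq]
    exact neg_mem (add_mem (pow_sub_pow_mem_idealGe 𝒜 hz (mem_idealGe_of_mem 𝒜 le_rfl hc)
      (sub_decompose_mem_idealGe_succ 𝒜 hz) N) (Ideal.sum_mem _ hterm))
  have hcN0 : c ^ N = 0 := eq_zero_of_mem_of_mem_idealGe 𝒜
    (by simpa using SetLike.pow_mem_graded N hc) hcN (Nat.lt_succ_self _)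
  exact IsNilpotent.eq_zero ⟨N, hcN0⟩

theorem isIntegrallyClosedIdeal_idealGe [IsReduced A] (m : ℕ) :
    IsIntegrallyClosedIdeal (idealGe 𝒜 m) := by
  intro z hint
  suffices ∀ d ≤ m, z ∈ idealGe 𝒜 d from this m le_rfl
  intro d hdm
  induction d with
  | zero => simp [idealGe_zero]
  | succ d ih =>
    have hz := ih (by omega)
    simpa [decompose_eq_zero_of_isIntegralOverIdeal 𝒜 hz hdm hint] using
      sub_decompose_mem_idealGe_succ 𝒜 hz

theorem pow_idealGe_eq {m : ℕ} (h : ∀ q, 0 < q →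
      idealGe 𝒜 m ^ (q + 1) = idealGe 𝒜 ((q + 1) * m) ∨
        idealGe 𝒜 ((q + 1) * m) ≤ idealGe 𝒜 m * idealGe 𝒜 (q * m))
    (q : ℕ) : idealGe 𝒜 m ^ (q + 1) = idealGe 𝒜 ((q + 1) * m) := by
  induction q with
  | zero => simp
  | succ q ih =>
    rcases h (q + 1) q.succ_pos with h | h
    · exact h
    · refine le_antisymm (pow_idealGe_le 𝒜 m _) ?_
      rwa [pow_succ', ih]

theorem isNormalIdeal_idealGe [IsReduced A] {m : ℕ}
    (h : ∀ q, idealGe 𝒜 m ^ (q + 1) = idealGe 𝒜 ((q + 1) * m)) :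
    IsNormalIdeal (idealGe 𝒜 m) := by
  intro p hp
  obtain ⟨q, rfl⟩ := Nat.exists_eq_add_of_lt hp
  rw [zero_add, h]
  exact isIntegrallyClosedIdeal_idealGe 𝒜 _

variable {ι : Type*} [Fintype ι] (x : ι → A) (ω : ι → ℕ)

def weightedMonomials (ℓ : ℕ) : Set A :=
  {a | ∃ c ∈ 𝒜 0, ∃ α : ι → ℕ, ∑ i, α i * ω i = ℓ ∧ a = c * ∏ i, x i ^ α i}

theorem weightedMonomials_mul_subset (i j : ℕ) :
    weightedMonomials 𝒜 x ω i * weightedMonomials 𝒜 x ω j ⊆ weightedMonomials 𝒜 x ω (i + j) := by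
  rintro _ ⟨_, ⟨c, hc, α, rfl, rfl⟩, _, ⟨c', hc', α', rfl, rfl⟩, rfl⟩
  refine ⟨c * c', by simpa using SetLike.mul_mem_graded hc hc', α + α', ?_, ?_⟩
  · simp [add_mul, Finset.sum_add_distrib]
  · simp only [Pi.add_apply, pow_add, Finset.prod_mul_distrib]
    ring

theorem span_weightedMonomials_mul_le (i j : ℕ) :
    Submodule.span ℤ (weightedMonomials 𝒜 x ω i) * Submodule.span ℤ (weightedMonomials 𝒜 x ω j)
      ≤ Submodule.span ℤ (weightedMonomials 𝒜 x ω (i + j)) := by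
  rw [Submodule.span_mul_span]
  exact Submodule.span_mono (weightedMonomials_mul_subset 𝒜 x ω i j)

theorem decompose_mem_span_weightedMonomials_of_mem {y : A} {e : ℕ} (hy : y ∈ 𝒜 e)
    (hyS : y ∈ weightedMonomials 𝒜 x ω e) (ℓ : ℕ) :
    (decompose 𝒜 y ℓ : A) ∈ Submodule.span ℤ (weightedMonomials 𝒜 x ω ℓ) := by
  rcases eq_or_ne e ℓ with rfl | he
  · rw [decompose_of_mem_same 𝒜 hy]
    exact Submodule.subset_span hyS
  · rw [decompose_of_mem_ne 𝒜 hy he]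
    exact zero_mem _

theorem decompose_mem_span_weightedMonomials (hx : ∀ i, x i ∈ 𝒜 (ω i))
    (hgen : Subring.closure ((𝒜 0 : Set A) ∪ Set.range x) = ⊤) (z : A) (ℓ : ℕ) :
    (decompose 𝒜 z ℓ : A) ∈ Submodule.span ℤ (weightedMonomials 𝒜 x ω ℓ) := by
  classical
  have hz : z ∈ Subring.closure ((𝒜 0 : Set A) ∪ Set.range x) := hgen ▸ Subring.mem_top z
  induction hz using Subring.closure_induction generalizing ℓ with
  | mem y hy =>
    rcases hy with hy | ⟨i, rfl⟩
    · exact decompose_mem_span_weightedMonomials_of_mem 𝒜 x ω hy ⟨y, hy, 0, by simp, by simp⟩ ℓ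
    · refine decompose_mem_span_weightedMonomials_of_mem 𝒜 x ω (hx i)
        ⟨1, SetLike.one_mem_graded 𝒜, Pi.single i 1, by simp [Pi.single_apply],
          by simp [Pi.single_apply]⟩ ℓ
  | zero => simp
  | one =>
    exact decompose_mem_span_weightedMonomials_of_mem 𝒜 x ω (SetLike.one_mem_graded 𝒜)
      ⟨1, SetLike.one_mem_graded 𝒜, 0, by simp, by simp⟩ ℓ
  | add a b _ _ ha hb =>
    rw [decompose_add, DirectSum.add_apply, AddMemClass.coe_add]
    exact add_mem (ha ℓ) (hb ℓ)
  | neg a _ ha =>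
    rw [decompose_neg, DFinsupp.neg_apply, NegMemClass.coe_neg]
    exact neg_mem (ha ℓ)
  | mul a b _ _ ha hb =>
    rw [decompose_mul, coe_mul_apply_eq_sum_antidiagonal]
    refine Submodule.sum_mem _ fun ij hij => ?_
    rw [← HasAntidiagonal.mem_antidiagonal.1 hij]
    exact span_weightedMonomials_mul_le 𝒜 x ω _ _ (Submodule.mul_mem_mul (ha ij.1) (hb ij.2))

theorem idealGe_le_mul_idealGe (hx : ∀ i, x i ∈ 𝒜 (ω i))
    (hgen : Subring.closure ((𝒜 0 : Set A) ∪ Set.range x) = ⊤) {w k q : ℕ}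
    (hdvd : ∀ i, ω i ∣ w) (hq : Fintype.card ι - 1 ≤ q * k) :
    idealGe 𝒜 ((q + 1) * k * w) ≤ idealGe 𝒜 (k * w) * idealGe 𝒜 (q * k * w) := by
  refine Ideal.span_le.2 ?_
  rintro z ⟨ℓ, hℓ, hz⟩
  have hzS : z ∈ Submodule.span ℤ (weightedMonomials 𝒜 x ω ℓ) := by
    simpa [decompose_of_mem_same 𝒜 hz] using
      decompose_mem_span_weightedMonomials 𝒜 x ω hx hgen z ℓ
  refine (Submodule.span_le.2 ?_ hzS :
    z ∈ (idealGe 𝒜 (k * w) * idealGe 𝒜 (q * k * w)).restrictScalars ℤ)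
  rintro _ ⟨c, hc, α, rfl, rfl⟩
  obtain ⟨β, hβα, hβ⟩ := exists_le_sum_mul_eq hdvd hq hℓ
  obtain ⟨γ, rfl⟩ := le_iff_exists_add.1 hβα
  have hγ : q * k * w ≤ ∑ i, γ i * ω i := by
    simp only [Pi.add_apply, add_mul, Finset.sum_add_distrib, hβ] at hℓ
    nlinarith
  rw [show c * ∏ i, x i ^ (β + γ) i = (∏ i, x i ^ β i) * (c * ∏ i, x i ^ γ i) by
    simp only [Pi.add_apply, pow_add, Finset.prod_mul_distrib]; ring]
  refine Ideal.mul_mem_mul (mem_idealGe_of_mem 𝒜 hβ.ge ?_) (mem_idealGe_of_mem 𝒜 hγ ?_)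
  · simpa using SetLike.prod_pow_mem_graded 𝒜 ω x β fun i _ => hx i
  · simpa using SetLike.mul_mem_graded hc
      (SetLike.prod_pow_mem_graded 𝒜 ω x γ fun i _ => hx i)

end GradedRing

theorem stmt6_general {A : Type*} [CommRing A] [IsReduced A] (𝒜 : ℕ → AddSubgroup A) [GradedRing 𝒜]
    {n : ℕ} (x : Fin n → A) (ω : Fin n → ℕ)
    (hx : ∀ i, x i ∈ 𝒜 (ω i))
    (hgen : Subring.closure ((𝒜 0 : Set A) ∪ Set.range x) = ⊤)
    (k : ℕ) (hk : 0 < k) (w : ℕ) (hw : w = Finset.univ.lcm ω)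
    (I : Ideal A) (hI : I = idealGe 𝒜 (k * w)) :
    ((∀ p : ℕ, 1 ≤ p → (p : ℚ) ≤ ((n : ℚ) - 2) / (k : ℚ) + 1 →
        I ^ p = idealGe 𝒜 (p * k * w)) →
      IsNormalIdeal I) ∧
    (n - 1 ≤ k → IsNormalIdeal I) := by
  subst hI
  have hdvd : ∀ i, ω i ∣ w := fun i => hw ▸ Finset.dvd_lcm (Finset.mem_univ i)
  have hmul : ∀ q, n - 1 ≤ q * k →
      idealGe 𝒜 ((q + 1) * (k * w)) ≤ idealGe 𝒜 (k * w) * idealGe 𝒜 (q * (k * w)) :=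
    fun q hq => by
      simpa only [mul_assoc] using
        idealGe_le_mul_idealGe 𝒜 x ω hx hgen hdvd (by rwa [Fintype.card_fin])
  refine ⟨fun hpow => isNormalIdeal_idealGe 𝒜 (pow_idealGe_eq 𝒜 fun q _ => ?_),
    fun hnk => isNormalIdeal_idealGe 𝒜 (pow_idealGe_eq 𝒜 fun q hq =>
      .inr (hmul q (hnk.trans (Nat.le_mul_of_pos_left k hq))))⟩
  by_cases hq : n - 1 ≤ q * k
  · exact .inr (hmul q hq)
  refine .inl ?_
  rw [hpow (q + 1) (by omega), mul_assoc]
  have hqk : (q : ℚ) * k + 2 ≤ n := by exact_mod_cast (by omega : q * k + 2 ≤ n)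
  have : (q : ℚ) ≤ ((n : ℚ) - 2) / k := by
    rw [le_div_iff₀ (by exact_mod_cast hk)]
    linarith
  push_cast
  linarith

theorem stmt6 {A : Type*} [CommRing A] [IsReduced A] (𝒜 : ℕ → AddSubgroup A) [GradedRing 𝒜]
    {n : ℕ} (x : Fin n → A) (ω : Fin n → ℕ) (hω : ∀ i, 0 < ω i)
    (hx : ∀ i, x i ∈ 𝒜 (ω i))
    (hgen : Subring.closure ((𝒜 0 : Set A) ∪ Set.range x) = ⊤)
    (k : ℕ) (hk : 0 < k) (w : ℕ) (hw : w = Finset.univ.lcm ω)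
    (I : Ideal A) (hI : I = idealGe 𝒜 (k * w)) :
    ((∀ p : ℕ, 1 ≤ p → (p : ℚ) ≤ ((n : ℚ) - 2) / (k : ℚ) + 1 →
        I ^ p = idealGe 𝒜 (p * k * w)) →
      IsNormalIdeal I) ∧
    (n - 1 ≤ k → IsNormalIdeal I) :=
  stmt6_general 𝒜 x ω hx hgen k hk w hw I hI
end

section
/- Let λ = (λ₁,…,λₙ) be a vector of positive integers with n ≥ 3 and suppose gcd(λ₁,…,λₙ) > n−2. Then the monomial ideal I(λ) ⊆ K[x₁,…,xₙ] is normal. -/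
open Finset

/-- The ideal `J(λ) = (x₁^{λ₁}, …, xₙ^{λₙ})` in `K[x₁,…,xₙ]`. -/
noncomputable def Jlam (K : Type*) [Field K] {n : ℕ} (lam : Fin n → ℕ) : Ideal (MvPolynomial (Fin n) K) :=
  Ideal.span (Set.range fun i => MvPolynomial.X i ^ lam i)

/-- The ideal `I(λ)`, the integral closure of `J(λ)` in `K[x₁,…,xₙ]`:
the ideal consisting of all elements integral over `J(λ)`. -/
noncomputable def Ilam (K : Type*) [Field K] {n : ℕ} (lam : Fin n → ℕ) : Ideal (MvPolynomial (Fin n) K) :=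
  Ideal.span {x | IsIntegralOverIdeal (Jlam K lam) x}


section Weight

variable {K : Type*} [Field K] {n : ℕ}

/-- weighted degree of an exponent vector -/
def wdeg (wt : Fin n → ℕ) (d : Fin n →₀ ℕ) : ℕ := ∑ i, d i * wt i

lemma wdeg_add (wt : Fin n → ℕ) (a b : Fin n →₀ ℕ) :
    wdeg wt (a + b) = wdeg wt a + wdeg wt b := by
  simp [wdeg, add_mul, Finset.sum_add_distrib]

lemma wdeg_single (wt : Fin n → ℕ) (i : Fin n) (k : ℕ) :
    wdeg wt (Finsupp.single i k) = k * wt i := by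
  classical
  simp [wdeg, Finsupp.single_apply]

/-- The ideal of polynomials all of whose monomials have weighted degree ≥ N. -/
def CId (K : Type*) [Field K] {n : ℕ} (wt : Fin n → ℕ) (N : ℕ) :
    Ideal (MvPolynomial (Fin n) K) where
  carrier := {f | ∀ d ∈ f.support, N ≤ wdeg wt d}
  zero_mem' := by simp
  add_mem' := by
    intro f g hf hg d hd
    rcases Finset.mem_union.1 (Finsupp.support_add hd) with h | h
    · exact hf d h
    · exact hg d h
  smul_mem' := by
    classical
    intro r f hf d hd
    rw [smul_eq_mul] at hd
    rcases Finset.mem_add.1 (MvPolynomial.support_mul r f hd) with ⟨a, _, b, hb, rfl⟩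
    calc N ≤ wdeg wt b := hf b hb
      _ ≤ wdeg wt a + wdeg wt b := Nat.le_add_left _ _
      _ = wdeg wt (a + b) := (wdeg_add wt a b).symm

lemma mem_CId {wt : Fin n → ℕ} {N : ℕ} {f : MvPolynomial (Fin n) K} :
    f ∈ CId K wt N ↔ ∀ d ∈ f.support, N ≤ wdeg wt d := Iff.rfl

lemma CId_mono {wt : Fin n → ℕ} {N N' : ℕ} (h : N ≤ N') :
    CId K wt N' ≤ CId K wt N := fun f hf d hd => le_trans h (hf d hd)

lemma CId_mul_mem {wt : Fin n → ℕ} {N M : ℕ} {f g : MvPolynomial (Fin n) K}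
    (hf : f ∈ CId K wt N) (hg : g ∈ CId K wt M) : f * g ∈ CId K wt (N + M) := by
  classical
  intro d hd
  rcases Finset.mem_add.1 (MvPolynomial.support_mul f g hd) with ⟨a, ha, b, hb, rfl⟩
  rw [wdeg_add]
  exact Nat.add_le_add (hf a ha) (hg b hb)

lemma CId_mul_le {wt : Fin n → ℕ} {N M : ℕ} :
    CId K wt N * CId K wt M ≤ CId K wt (N + M) :=
  Ideal.mul_le.2 fun f hf g hg => CId_mul_mem hf hg

lemma CId_pow_le {wt : Fin n → ℕ} {N : ℕ} (k : ℕ) :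
    (CId K wt N) ^ k ≤ CId K wt (k * N) := by
  induction k with
  | zero => intro f _ d _; simp
  | succ k ih =>
      rw [pow_succ]
      refine le_trans (Ideal.mul_le.2 fun f hf g hg => ?_) (le_refl _)
      have := CId_mul_mem (ih hf) hg
      rwa [show k * N + N = (k+1) * N by ring] at this

end Weight

section Low

variable {K : Type*} [Field K] {n : ℕ}

open MvPolynomial

/-- the part of `f` of weighted degree exactly `u` -/
noncomputable def low (wt : Fin n → ℕ) (u : ℕ) (f : MvPolynomial (Fin n) K) :
    MvPolynomial (Fin n) K :=
  ∑ d ∈ f.support.filter (fun d => wdeg wt d = u), monomial d (MvPolynomial.coeff d f)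

lemma coeff_low (wt : Fin n → ℕ) (u : ℕ) (f : MvPolynomial (Fin n) K) (d : Fin n →₀ ℕ) :
    MvPolynomial.coeff d (low wt u f) = if wdeg wt d = u then MvPolynomial.coeff d f else 0 := by
  classical
  simp only [low, MvPolynomial.coeff_sum, MvPolynomial.coeff_monomial]
  rw [Finset.sum_ite_eq' (f.support.filter (fun d => wdeg wt d = u)) d
      (fun e => MvPolynomial.coeff e f)]
  by_cases h1 : wdeg wt d = u
  · by_cases h2 : MvPolynomial.coeff d f = 0 <;>
      simp [Finset.mem_filter, MvPolynomial.mem_support_iff, h1, h2]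
  · simp [Finset.mem_filter, h1]

lemma support_low (wt : Fin n → ℕ) (u : ℕ) (f : MvPolynomial (Fin n) K) (d : Fin n →₀ ℕ)
    (hd : d ∈ (low wt u f).support) : d ∈ f.support ∧ wdeg wt d = u := by
  rw [MvPolynomial.mem_support_iff, coeff_low] at hd
  by_cases h1 : wdeg wt d = u
  · simp only [h1, if_true] at hd
    exact ⟨MvPolynomial.mem_support_iff.2 hd, h1⟩
  · simp [h1] at hd

lemma support_sub_low (wt : Fin n → ℕ) (u : ℕ) (f : MvPolynomial (Fin n) K) (d : Fin n →₀ ℕ)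
    (hd : d ∈ (f - low wt u f).support) : d ∈ f.support ∧ wdeg wt d ≠ u := by
  rw [MvPolynomial.mem_support_iff, MvPolynomial.coeff_sub, coeff_low] at hd
  by_cases h1 : wdeg wt d = u
  · simp [h1] at hd
  · simp only [h1, if_false, sub_zero] at hd
    exact ⟨MvPolynomial.mem_support_iff.2 hd, h1⟩

lemma low_ne_zero (wt : Fin n → ℕ) (u : ℕ) (f : MvPolynomial (Fin n) K)
    (h : ∃ d ∈ f.support, wdeg wt d = u) : low wt u f ≠ 0 := by
  obtain ⟨d, hd, hw⟩ := h
  intro h0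
  have := coeff_low wt u f d
  rw [h0, hw, if_pos rfl] at this
  exact MvPolynomial.mem_support_iff.1 hd this.symm

/-- key multiplicativity: the product of two polynomials with minimal weighted degrees
`u`, `v` has a monomial of weighted degree exactly `u + v`. -/
lemma exists_coeff_mul_wdeg (wt : Fin n → ℕ) {f g : MvPolynomial (Fin n) K}
    {u v : ℕ}
    (hfl : ∀ d ∈ f.support, u ≤ wdeg wt d) (hgl : ∀ d ∈ g.support, v ≤ wdeg wt d)
    (hfe : ∃ d ∈ f.support, wdeg wt d = u) (hge : ∃ d ∈ g.support, wdeg wt d = v) :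
    ∃ c ∈ (f * g).support, wdeg wt c = u + v := by
  classical
  set f₀ := low wt u f with hf₀
  set g₀ := low wt v g with hg₀
  have hf0 : f₀ ≠ 0 := low_ne_zero wt u f hfe
  have hg0 : g₀ ≠ 0 := low_ne_zero wt v g hge
  have hprod : f₀ * g₀ ≠ 0 := mul_ne_zero hf0 hg0
  obtain ⟨c, hc⟩ := Finset.nonempty_iff_ne_empty.2 (mt MvPolynomial.support_eq_empty.1 hprod)
  have hcw : wdeg wt c = u + v := by
    rcases Finset.mem_add.1 (MvPolynomial.support_mul f₀ g₀ hc) with ⟨a, ha, b, hb, rfl⟩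
    rw [wdeg_add, (support_low wt u f a ha).2, (support_low wt v g b hb).2]
  refine ⟨c, ?_, hcw⟩
  rw [MvPolynomial.mem_support_iff]
  have key : MvPolynomial.coeff c (f * g) = MvPolynomial.coeff c (f₀ * g₀) := by
    have hsplit : f * g = f₀ * g₀ + (f₀ * (g - g₀) + (f - f₀) * g) := by ring
    rw [hsplit, MvPolynomial.coeff_add, MvPolynomial.coeff_add]
    have h1 : MvPolynomial.coeff c (f₀ * (g - g₀)) = 0 := by
      rw [← MvPolynomial.notMem_support_iff]
      intro hmem
      rcases Finset.mem_add.1 (MvPolynomial.support_mul _ _ hmem) with ⟨a, ha, b, hb, hab⟩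
      have h1 := (support_low wt u f a ha).2
      obtain ⟨hbs, hbn⟩ := support_sub_low wt v g b hb
      have h2 := hgl b hbs
      have := hcw
      rw [← hab, wdeg_add, h1] at this
      omega
    have h2 : MvPolynomial.coeff c ((f - f₀) * g) = 0 := by
      rw [← MvPolynomial.notMem_support_iff]
      intro hmem
      rcases Finset.mem_add.1 (MvPolynomial.support_mul _ _ hmem) with ⟨a, ha, b, hb, hab⟩
      obtain ⟨has, han⟩ := support_sub_low wt u f a ha
      have hh1 := hfl a has
      have hh2 := hgl b hb
      have := hcw
      rw [← hab, wdeg_add] at this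
      omega
    rw [h1, h2]
    ring
  rw [key]
  exact MvPolynomial.mem_support_iff.1 hc

end Low

section Key

variable {K : Type*} [Field K] {n : ℕ}

open MvPolynomial

lemma exists_coeff_pow_wdeg (wt : Fin n → ℕ) {x : MvPolynomial (Fin n) K} (hx : x ≠ 0)
    {u : ℕ} (hl : ∀ d ∈ x.support, u ≤ wdeg wt d) (he : ∃ d ∈ x.support, wdeg wt d = u)
    (r : ℕ) :
    (∀ d ∈ (x ^ r).support, r * u ≤ wdeg wt d) ∧ ∃ c ∈ (x ^ r).support, wdeg wt c = r * u := by
  classical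
  induction r with
  | zero =>
      constructor
      · intro d _; simp
      · refine ⟨0, ?_, by simp [wdeg]⟩
        simp [MvPolynomial.mem_support_iff]
  | succ r ih =>
      obtain ⟨ihl, ihe⟩ := ih
      have hb : ∀ d ∈ (x ^ r * x).support, r * u + u ≤ wdeg wt d := by
        intro d hd
        rcases Finset.mem_add.1 (MvPolynomial.support_mul _ _ hd) with ⟨a, ha, b, hb, rfl⟩
        rw [wdeg_add]
        exact Nat.add_le_add (ihl a ha) (hl b hb)
      have hex := exists_coeff_mul_wdeg wt ihl hl ihe he
      rw [pow_succ]
      constructor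
      · intro d hd
        have h := hb d hd
        calc (r+1) * u = r * u + u := by ring
          _ ≤ wdeg wt d := h
      · obtain ⟨c, hc, hcw⟩ := hex
        exact ⟨c, hc, by rw [hcw]; ring⟩

/-- an element integral over an ideal contained in `CId K wt N` lies in `CId K wt N`. -/
lemma mem_CId_of_integral {wt : Fin n → ℕ} {N : ℕ} {I : Ideal (MvPolynomial (Fin n) K)}
    (hIN : I ≤ CId K wt N) {x : MvPolynomial (Fin n) K}
    (hx : IsIntegralOverIdeal I x) : x ∈ CId K wt N := by
  classical
  by_cases hx0 : x = 0
  · subst hx0; exact (CId K wt N).zero_mem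
  -- minimal weighted degree of x
  have hsupp : x.support.Nonempty := Finset.nonempty_iff_ne_empty.2 (mt MvPolynomial.support_eq_empty.1 hx0)
  obtain ⟨d₀, hd₀, hmin⟩ := Finset.exists_min_image x.support (wdeg wt) hsupp
  set u := wdeg wt d₀ with hu
  by_cases hNu : N ≤ u
  · intro d hd
    exact le_trans hNu (hmin d hd)
  -- now u < N ; derive a contradiction
  exfalso
  push_neg at hNu
  obtain ⟨r, hr, a, ha, heq⟩ := hx
  have hxr : x ^ r = -(∑ k ∈ Finset.Icc 1 r, a k * x ^ (r - k)) := by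
    rw [eq_neg_iff_add_eq_zero]
    exact heq
  have hS : (∑ k ∈ Finset.Icc 1 r, a k * x ^ (r - k)) ∈ CId K wt (r * u + 1) := by
    refine Submodule.sum_mem _ fun k hk => ?_
    rw [Finset.mem_Icc] at hk
    have hak : a k ∈ CId K wt (k * N) := CId_pow_le k (Ideal.pow_right_mono hIN k (ha k (Finset.mem_Icc.2 hk)))
    have hxk : x ^ (r - k) ∈ CId K wt ((r - k) * u) := by
      intro d hd
      exact (exists_coeff_pow_wdeg wt hx0 hmin ⟨d₀, hd₀, rfl⟩ (r - k)).1 d hd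
    have := CId_mul_mem hak hxk
    refine CId_mono ?_ this
    have h1 : k * (u + 1) ≤ k * N := Nat.mul_le_mul_left k (by omega)
    have h2 : k * u + (r - k) * u = r * u := by
      rw [← add_mul]; congr 1; omega
    have h3 : k * (u + 1) = k * u + k := by ring
    omega
  have hxrmem : x ^ r ∈ CId K wt (r * u + 1) := by
    rw [hxr]; exact Submodule.neg_mem _ hS
  obtain ⟨c, hc, hcw⟩ := (exists_coeff_pow_wdeg wt hx0 hmin ⟨d₀, hd₀, rfl⟩ r).2
  have := hxrmem c hc
  omega

end Key

section Main

open MvPolynomial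

lemma prod_monomial_one {K : Type*} [Field K] {n : ℕ} {ι : Type*} (s : Finset ι)
    (f : ι → (Fin n →₀ ℕ)) :
    ∏ i ∈ s, (monomial (f i) (1 : K)) = monomial (∑ i ∈ s, f i) 1 := by
  classical
  induction s using Finset.cons_induction with
  | empty => simp [MvPolynomial.monomial_zero']
  | cons a s ha ih =>
      rw [Finset.prod_cons, Finset.sum_cons, ih, MvPolynomial.monomial_mul, one_mul]

lemma prod_pow_mem {A : Type*} [CommRing A] (J : Ideal A) {ι : Type*} (s : Finset ι)
    (f : ι → A) (c : ι → ℕ) (h : ∀ i ∈ s, f i ∈ J) :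
    ∏ i ∈ s, f i ^ c i ∈ J ^ (∑ i ∈ s, c i) := by
  classical
  induction s using Finset.cons_induction with
  | empty => simp
  | cons a s ha ih =>
      rw [Finset.prod_cons, Finset.sum_cons, pow_add]
      exact Ideal.mul_mem_mul (Ideal.pow_mem_pow (h a (Finset.mem_cons_self a s)) _)
        (ih fun i hi => h i (Finset.mem_cons_of_mem hi))

variable {K : Type*} [Field K] {n : ℕ}

theorem aux_normal (hn : 0 < n) (lam μ wt : Fin n → ℕ) (g P : ℕ)
    (hg : 0 < g) (hP : 0 < P) (hwtpos : ∀ i, 0 < wt i) (hμpos : ∀ i, 0 < μ i)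
    (hlameq : ∀ i, lam i = g * μ i) (hμwt : ∀ i, μ i * wt i = P)
    (hng : n ≤ g + 1) : IsNormalIdeal (Ilam K lam) := by
  classical
  -- generators have weight exactly g*P
  have genmem : ∀ i, (MvPolynomial.X i ^ lam i : MvPolynomial (Fin n) K) ∈ CId K wt (g * P) := by
    intro i e he
    rw [MvPolynomial.X_pow_eq_monomial] at he
    have he' : e = Finsupp.single i (lam i) := by
      simpa [MvPolynomial.support_monomial] using he
    subst he'
    rw [wdeg_single, hlameq i, mul_assoc, hμwt i]
  have JleC : Jlam K lam ≤ CId K wt (g * P) := by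
    rw [Jlam, Ideal.span_le]
    rintro _ ⟨i, rfl⟩
    exact genmem i
  have IleC : Ilam K lam ≤ CId K wt (g * P) := by
    rw [Ilam, Ideal.span_le]
    intro x hx
    exact mem_CId_of_integral JleC hx
  -- monomials of weight ≥ g*P are integral over Jlam
  have monomial_integral : ∀ d : Fin n →₀ ℕ, g * P ≤ wdeg wt d →
      IsIntegralOverIdeal (Jlam K lam) (monomial d (1 : K)) := by
    intro d hd
    set e := g * P with he
    have hepos : 0 < e := Nat.mul_pos hg hP
    have hprodeq : (monomial d (1 : K)) ^ e = ∏ i, (MvPolynomial.X i ^ lam i) ^ (d i * wt i) := by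
      have h1 : ∀ i : Fin n, (MvPolynomial.X i ^ lam i : MvPolynomial (Fin n) K) ^ (d i * wt i)
          = monomial (Finsupp.single i (lam i * (d i * wt i))) 1 := by
        intro i
        rw [← pow_mul, MvPolynomial.X_pow_eq_monomial]
      rw [Finset.prod_congr rfl (fun i _ => h1 i), prod_monomial_one,
        MvPolynomial.monomial_pow, one_pow]
      have hexp : e • d = ∑ i, Finsupp.single i (lam i * (d i * wt i)) := by
        ext j
        rw [Finsupp.smul_apply, Finsupp.coe_finset_sum, Finset.sum_apply]
        have : ∀ i : Fin n, (Finsupp.single i (lam i * (d i * wt i))) j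
            = if i = j then lam i * (d i * wt i) else 0 := by
          intro i; rw [Finsupp.single_apply]
        rw [Finset.sum_congr rfl (fun i _ => this i), Finset.sum_ite_eq' Finset.univ j
          (fun i => lam i * (d i * wt i)), if_pos (Finset.mem_univ j)]
        rw [hlameq j, smul_eq_mul]
        calc e * d j = g * P * d j := by rw [he]
          _ = g * μ j * (d j * wt j) := by rw [← hμwt j]; ring
      rw [hexp]
    have hmem : (monomial d (1 : K)) ^ e ∈ (Jlam K lam) ^ e := by
      rw [hprodeq]
      have h2 := prod_pow_mem (Jlam K lam) Finset.univ
        (fun i => (MvPolynomial.X i ^ lam i : MvPolynomial (Fin n) K)) (fun i => d i * wt i)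
        (fun i _ => Ideal.subset_span ⟨i, rfl⟩)
      have h3 : (∑ i, d i * wt i) = wdeg wt d := rfl
      rw [h3] at h2
      exact Ideal.pow_le_pow_right hd h2
    refine ⟨e, hepos, fun k => if k = e then -((monomial d (1:K)) ^ e) else 0, ?_, ?_⟩
    · intro k hk
      dsimp only
      by_cases hke : k = e
      · subst hke; rw [if_pos rfl]; exact Submodule.neg_mem _ hmem
      · rw [if_neg hke]; exact Submodule.zero_mem _
    · rw [Finset.sum_eq_single_of_mem e (Finset.mem_Icc.2 ⟨hepos, le_refl e⟩)]
      · dsimp only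
        rw [if_pos rfl, Nat.sub_self, pow_zero, mul_one, add_neg_cancel]
      · intro k _ hke
        dsimp only
        rw [if_neg hke, zero_mul]
  have CleI : CId K wt (g * P) ≤ Ilam K lam := by
    intro f hf
    have hsum : ∑ d ∈ f.support, monomial d (MvPolynomial.coeff d f) ∈ Ilam K lam := by
      refine Submodule.sum_mem _ fun d hd => ?_
      have h1 : monomial d (MvPolynomial.coeff d f)
          = MvPolynomial.C (MvPolynomial.coeff d f) * monomial d 1 := by
        rw [MvPolynomial.C_mul_monomial, mul_one]
      rw [h1]
      exact Ideal.mul_mem_left _ _ (Ideal.subset_span (monomial_integral d (hf d hd)))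
    rwa [MvPolynomial.support_sum_monomial_coeff] at hsum
  -- descent
  have descend : ∀ (j : ℕ) (d : Fin n →₀ ℕ), (g + j) * P ≤ wdeg wt d →
      monomial d (1 : K) ∈ (CId K wt P) ^ j * CId K wt (g * P) := by
    intro j
    induction j with
    | zero =>
        intro d hd
        rw [pow_zero, one_mul]
        intro e he
        have he' : e = d := by
          simpa [MvPolynomial.support_monomial] using he
        subst he'
        calc g * P = (g + 0) * P := by ring
          _ ≤ wdeg wt e := hd
    | succ j ih =>
        intro d hd
        have hex : ∃ i, μ i ≤ d i := by
          by_contra hcon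
          push_neg at hcon
          have hb : ∀ i : Fin n, d i * wt i ≤ P - wt i := by
            intro i
            have h1 : d i ≤ μ i - 1 := by have := hcon i; omega
            calc d i * wt i ≤ (μ i - 1) * wt i := Nat.mul_le_mul_right _ h1
              _ = μ i * wt i - wt i := by rw [Nat.sub_one_mul]
              _ = P - wt i := by rw [hμwt i]
          have hW : wdeg wt d ≤ ∑ i, (P - wt i) := Finset.sum_le_sum fun i _ => hb i
          have hwtP : ∀ i : Fin n, wt i ≤ P := by
            intro i
            calc wt i = 1 * wt i := (one_mul _).symm
              _ ≤ μ i * wt i := Nat.mul_le_mul_right _ (hμpos i)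
              _ = P := hμwt i
          have hsum1 : ∑ i, (P - wt i) + ∑ i : Fin n, wt i = n * P := by
            rw [← Finset.sum_add_distrib,
              Finset.sum_congr rfl (fun i _ => Nat.sub_add_cancel (hwtP i))]
            simp [Finset.sum_const, Finset.card_univ, mul_comm]
          have hsum2 : n ≤ ∑ i : Fin n, wt i := by
            calc n = ∑ _i : Fin n, 1 := by simp
              _ ≤ ∑ i : Fin n, wt i := Finset.sum_le_sum fun i _ => hwtpos i
          have hnP : n * P ≤ (g + (j + 1)) * P := Nat.mul_le_mul_right _ (by omega)
          linarith
        obtain ⟨i, hi⟩ := hex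
        set d' := d - Finsupp.single i (μ i) with hd'
        have hsum : Finsupp.single i (μ i) + d' = d := by
          ext a
          rw [Finsupp.add_apply, hd', Finsupp.tsub_apply]
          rcases eq_or_ne i a with rfl | hne
          · rw [Finsupp.single_eq_same]; omega
          · rw [Finsupp.single_eq_of_ne' hne]; omega
        have hwd : wdeg wt d = P + wdeg wt d' := by
          conv_lhs => rw [← hsum]
          rw [wdeg_add, wdeg_single, hμwt i]
        have hd'w : (g + j) * P ≤ wdeg wt d' := by
          have h1 : (g + (j + 1)) * P = (g + j) * P + P := by ring
          rw [h1] at hd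
          omega
        have hm1 : monomial (Finsupp.single i (μ i)) (1 : K) ∈ CId K wt P := by
          intro e he
          have he' : e = Finsupp.single i (μ i) := by
            simpa [MvPolynomial.support_monomial] using he
          subst he'
          rw [wdeg_single, hμwt i]
        have heq : monomial d (1 : K) = monomial (Finsupp.single i (μ i)) 1 * monomial d' 1 := by
          rw [MvPolynomial.monomial_mul, one_mul, hsum]
        rw [heq]
        have hmul := Ideal.mul_mem_mul hm1 (ih d' hd'w)
        rwa [← mul_assoc, ← pow_succ'] at hmul
  -- C (m*(g*P)) ≤ Ilam ^ m
  have CgmleIm : ∀ m : ℕ, 0 < m → CId K wt (m * (g * P)) ≤ (Ilam K lam) ^ m := by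
    intro m hm f hf
    obtain ⟨m', rfl⟩ : ∃ m', m = m' + 1 := ⟨m - 1, by omega⟩
    have hsum : ∑ d ∈ f.support, monomial d (MvPolynomial.coeff d f) ∈ (Ilam K lam) ^ (m' + 1) := by
      refine Submodule.sum_mem _ fun d hd => ?_
      have hwd : (g + g * m') * P ≤ wdeg wt d := by
        have h1 := hf d hd
        have h2 : (m' + 1) * (g * P) = (g + g * m') * P := by ring
        rw [h2] at h1
        exact h1
      have h1 := descend (g * m') d hwd
      have h2 : (CId K wt P) ^ (g * m') * CId K wt (g * P) ≤ (Ilam K lam) ^ (m' + 1) := by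
        have hC : (CId K wt P) ^ g ≤ Ilam K lam := le_trans (CId_pow_le g) CleI
        calc (CId K wt P) ^ (g * m') * CId K wt (g * P)
            = ((CId K wt P) ^ g) ^ m' * CId K wt (g * P) := by rw [← pow_mul]
          _ ≤ (Ilam K lam) ^ m' * Ilam K lam :=
              Ideal.mul_mono (Ideal.pow_right_mono hC m') CleI
          _ = (Ilam K lam) ^ (m' + 1) := (pow_succ _ _).symm
      have h3 : monomial d (MvPolynomial.coeff d f)
          = MvPolynomial.C (MvPolynomial.coeff d f) * monomial d 1 := by
        rw [MvPolynomial.C_mul_monomial, mul_one]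
      rw [h3]
      exact Ideal.mul_mem_left _ _ (h2 h1)
    rwa [MvPolynomial.support_sum_monomial_coeff] at hsum
  -- conclude
  intro m hm x hx
  have hpow : (Ilam K lam) ^ m ≤ CId K wt (m * (g * P)) :=
    le_trans (Ideal.pow_right_mono IleC m) (CId_pow_le m)
  exact CgmleIm m hm (mem_CId_of_integral hpow hx)

end Main

theorem stmt9 {K : Type*} [Field K] {n : ℕ} (hn : 3 ≤ n)
    (lam : Fin n → ℕ) (hlam : ∀ i, 0 < lam i)
    (hgcd : n - 2 < Finset.univ.gcd lam) :
    IsNormalIdeal (Ilam K lam) := by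
  classical
  set g := Finset.univ.gcd lam with hgdef
  have hdvd : ∀ i, g ∣ lam i := fun i => Finset.gcd_dvd (Finset.mem_univ i)
  have hg : 0 < g := by omega
  set μ : Fin n → ℕ := fun i => lam i / g with hμdef
  have hμpos : ∀ i, 0 < μ i := fun i => Nat.div_pos (Nat.le_of_dvd (hlam i) (hdvd i)) hg
  have hlameq : ∀ i, lam i = g * μ i := fun i => (Nat.mul_div_cancel' (hdvd i)).symm
  set P : ℕ := ∏ i, μ i with hPdef
  have hP : 0 < P := Finset.prod_pos fun i _ => hμpos i
  have hμdvdP : ∀ i, μ i ∣ P := fun i => Finset.dvd_prod_of_mem μ (Finset.mem_univ i)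
  set wt : Fin n → ℕ := fun i => P / μ i with hwtdef
  have hμwt : ∀ i, μ i * wt i = P := fun i => Nat.mul_div_cancel' (hμdvdP i)
  have hwtpos : ∀ i, 0 < wt i := fun i => Nat.div_pos (Nat.le_of_dvd hP (hμdvdP i)) (hμpos i)
  exact aux_normal (by omega) lam μ wt g P hg hP hwtpos hμpos hlameq hμwt (by omega)
end
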